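/- Let ε ∈ {1, -1}, R = F_{p^m}[u]/⟨u²⟩, p^m ≡ 3 (mod 4), γ^4 = -4α₀ with α₀ a non-square in F_{p^m}. The ring S = R[x]/⟨(x²+εγx+γ²/2)^{p^s}⟩ is a finite commutative local ring with maximal ideal ⟨x²+εγx+γ²/2, u⟩, and S is not a chain ring. -/

import Mathlib

open Polynomial

/-- The chain ring `R = F_{p^m}[u]/⟨u²⟩`. -/
abbrev Ru (K : Type) [Field K] : Type := K[X] ⧸ Ideal.span {(X : K[X]) ^ 2}

noncomputable instance (K : Type) [Field K] : CommRing (Ru K) :=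
  Ideal.Quotient.commRing _

/-- The element `u` of `R`. -/
noncomputable def uR (K : Type) [Field K] : Ru K :=
  Ideal.Quotient.mk _ (X : K[X])

/-- The natural inclusion of `F_{p^m}` into `R`. -/
noncomputable def tR (K : Type) [Field K] (a : K) : Ru K :=
  Ideal.Quotient.mk _ (C a : K[X])

/-- The quadratic `x² + εγx + γ²/2`, viewed over `R`. -/
noncomputable def qR (K : Type) [Field K] (g : K) : (Ru K)[X] :=
  X ^ 2 + C (tR K g) * X + C (tR K (g ^ 2 / 2))

/-- The ring `S = R[x]/⟨(x² + εγx + γ²/2)^{p^s}⟩`. -/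
abbrev SR (K : Type) [Field K] (g : K) (n : ℕ) : Type :=
  (Ru K)[X] ⧸ Ideal.span {qR K g ^ n}

/-- The canonical projection `R[x] → S`. -/
noncomputable def mkS (K : Type) [Field K] (g : K) (n : ℕ) : (Ru K)[X] →+* SR K g n :=
  Ideal.Quotient.mk _

noncomputable def phiR (K : Type) [Field K] : (K[X] ⧸ Ideal.span {(X : K[X]) ^ 2}) →+* K :=
  Ideal.Quotient.lift _ (evalRingHom (0 : K)) (by
    intro a ha
    rw [Ideal.mem_span_singleton] at ha
    obtain ⟨b, rfl⟩ := ha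
    simp)

noncomputable def tauR (K : Type) [Field K] : K →+* (K[X] ⧸ Ideal.span {(X : K[X]) ^ 2}) :=
  (Ideal.Quotient.mk _).comp (C : K →+* K[X])

lemma phi_tau (K : Type) [Field K] (a : K) : phiR K (tauR K a) = a := by
  simp [phiR, tauR]

lemma phi_u (K : Type) [Field K] :
    phiR K (Ideal.Quotient.mk _ (X : K[X])) = 0 := by
  simp [phiR]

lemma ker_phi (K : Type) [Field K] :
    RingHom.ker (phiR K) = Ideal.span {Ideal.Quotient.mk _ (X : K[X])} := by
  rw [phiR]
  erw [Ideal.ker_quotient_lift]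
  rw [Polynomial.ker_evalRingHom]
  simp [Ideal.map_span]

lemma monic_aux {R : Type*} [CommRing R] (a b : R) : (X ^ 2 + C a * X + C b).Monic := by
  rw [add_assoc]
  exact monic_X_pow_add (lt_of_le_of_lt degree_linear_le (by norm_num))

noncomputable def qbar (K : Type) [Field K] (g : K) : K[X] :=
  X ^ 2 + C g * X + C (g ^ 2 / 2)

lemma qbar_monic (K : Type) [Field K] (g : K) : (qbar K g).Monic := monic_aux _ _

lemma qbar_natDegree (K : Type) [Field K] (g : K) : (qbar K g).natDegree = 2 := by
  have := natDegree_quadratic (a := (1:K)) (b := g) (c := g ^ 2 / 2) one_ne_zero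
  simpa [qbar] using this

lemma map_q (K : Type) [Field K] (g : K) :
    Polynomial.mapRingHom (phiR K) (qR K g) = qbar K g := by
  have h1 : phiR K (tR K g) = g := phi_tau K g
  have h2 : phiR K (tR K (g ^ 2 / 2)) = g ^ 2 / 2 := phi_tau K _
  simp [qR, qbar, Polynomial.map_add, Polynomial.map_mul, Polynomial.map_pow, h1, h2]

lemma qbar_irred (K : Type) [Field K] (g : K) (h2 : (2:K) ≠ 0) (hg : g ≠ 0)
    (hsq : ¬ IsSquare (-1 : K)) : Irreducible (qbar K g) := by
  rw [Polynomial.irreducible_iff_roots_eq_zero_of_degree_le_three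
    (by rw [qbar_natDegree]) (by rw [qbar_natDegree]; norm_num)]
  rw [Multiset.eq_zero_iff_forall_notMem]
  intro r hr
  rw [mem_roots ((qbar_monic K g).ne_zero)] at hr
  have heval : r ^ 2 + g * r + g ^ 2 / 2 = 0 := by
    simpa [qbar, IsRoot] using hr
  have hhalf : g ^ 2 / 2 * 2 = g ^ 2 := div_mul_cancel₀ _ h2
  have heval2 : 2 * r ^ 2 + 2 * (g * r) + g ^ 2 = 0 := by
    linear_combination 2 * heval - hhalf
  have hkey : (2 * r + g) ^ 2 = -(g ^ 2) := by linear_combination 2 * heval2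
  apply hsq
  refine ⟨(2 * r + g) / g, ?_⟩
  field_simp
  linear_combination -hkey

lemma uR_ne_zero (K : Type) [Field K] : uR K ≠ 0 := by
  rw [uR, Ne, Ideal.Quotient.eq_zero_iff_mem, Ideal.mem_span_singleton]
  intro hdvd
  have := Polynomial.natDegree_le_of_dvd hdvd (X_ne_zero (R := K))
  simp [natDegree_X_pow, natDegree_X] at this

lemma uR_sq (K : Type) [Field K] : uR K ^ 2 = 0 := by
  rw [uR, ← map_pow, Ideal.Quotient.eq_zero_iff_mem]
  exact Ideal.mem_span_singleton_self _


set_option maxHeartbeats 1000000 in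
theorem stmt17 (p s m : ℕ) (hp : p.Prime) (hodd : Odd p) (hs : 0 < s) (hm : 0 < m)
    (K : Type) [Field K] [Fintype K] (hK : Fintype.card K = p ^ m)
    (h3 : p ^ m % 4 = 3) (α₀ : K) (hα₀ : α₀ ≠ 0) (hns : ¬ IsSquare α₀)
    (γ : K) (hγ : γ ^ 4 = -4 * α₀) (ε : K) (hε : ε = 1 ∨ ε = -1) :
    (Ideal.span {mkS K (ε * γ) (p ^ s) (qR K (ε * γ)),
        mkS K (ε * γ) (p ^ s) (C (uR K))}).IsMaximal ∧
    (∀ M : Ideal (SR K (ε * γ) (p ^ s)), M.IsMaximal →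
        M = Ideal.span {mkS K (ε * γ) (p ^ s) (qR K (ε * γ)),
          mkS K (ε * γ) (p ^ s) (C (uR K))}) ∧
    ¬ ∀ I J : Ideal (SR K (ε * γ) (p ^ s)), I ≤ J ∨ J ≤ I := by
  set g : K := ε * γ with hgdef
  set n : ℕ := p ^ s with hndef
  -- characteristic facts
  have hchar2 : ringChar K ≠ 2 := by
    intro h
    have h2 := (FiniteField.even_card_iff_char_two (F := K)).mp h
    rw [hK] at h2
    omega
  have h2K : (2 : K) ≠ 0 := Ring.two_ne_zero hchar2
  have hγ0 : γ ≠ 0 := by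
    intro h
    apply hα₀
    have h4 : (-4 : K) ≠ 0 := by
      have : (-4 : K) = -(2 * 2) := by norm_num
      rw [this]
      exact neg_ne_zero.mpr (mul_ne_zero h2K h2K)
    have hz : (-4 : K) * α₀ = 0 := by rw [← hγ, h]; ring
    rcases mul_eq_zero.mp hz with h' | h'
    · exact absurd h' h4
    · exact h'
  have hgne : g ≠ 0 := by
    have hεne : ε ≠ 0 := by rcases hε with rfl | rfl <;> simp
    exact mul_ne_zero hεne hγ0
  have hsqn : ¬ IsSquare (-1 : K) := by
    rw [FiniteField.isSquare_neg_one_iff, hK]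
    exact fun h => h h3
  have hirr : Irreducible (qbar K g) := qbar_irred K g h2K hgne hsqn
  haveI hmax0 : (Ideal.span {qbar K g}).IsMaximal :=
    PrincipalIdealRing.isMaximal_of_irreducible hirr
  letI : Field (K[X] ⧸ Ideal.span {qbar K g}) := Ideal.Quotient.field _
  set Φ : (Ru K)[X] →+* K[X] ⧸ Ideal.span {qbar K g} :=
    (Ideal.Quotient.mk _).comp (Polynomial.mapRingHom (phiR K)) with hΦdef
  have hΦq : Φ (qR K g) = 0 := by
    rw [hΦdef, RingHom.comp_apply, map_q, Ideal.Quotient.eq_zero_iff_mem]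
    exact Ideal.mem_span_singleton_self _
  have hΦu : Φ (C (uR K)) = 0 := by
    rw [hΦdef, RingHom.comp_apply, coe_mapRingHom, map_C]
    have : phiR K (uR K) = 0 := phi_u K
    rw [this, map_zero, map_zero]
  have hn0 : 0 < n := pow_pos hp.pos s
  have hker : Ideal.span {qR K g ^ n} ≤ RingHom.ker Φ := by
    rw [Ideal.span_le, Set.singleton_subset_iff]
    rw [SetLike.mem_coe, RingHom.mem_ker, map_pow, hΦq, zero_pow hn0.ne']
  set f : ((Ru K)[X] ⧸ Ideal.span {qR K g ^ n}) →+* (K[X] ⧸ Ideal.span {qbar K g}) :=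
    Ideal.Quotient.lift _ Φ (fun a ha => hker ha) with hfdef
  have hf_mk : ∀ P : (Ru K)[X], f (mkS K g n P) = Φ P := fun P => rfl
  have hphisurj : Function.Surjective (phiR K) := fun a => ⟨tauR K a, phi_tau K a⟩
  have hmapsurj : Function.Surjective (Polynomial.mapRingHom (phiR K)) :=
    Polynomial.map_surjective _ hphisurj
  have hfsurj : Function.Surjective f := by
    intro y
    obtain ⟨z, rfl⟩ := Ideal.Quotient.mk_surjective y
    obtain ⟨w, hw⟩ := hmapsurj z
    exact ⟨mkS K g n w, by rw [hf_mk, hΦdef, RingHom.comp_apply, hw]⟩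
  set M : Ideal ((Ru K)[X] ⧸ Ideal.span {qR K g ^ n}) :=
    Ideal.span {mkS K g n (qR K g), mkS K g n (C (uR K))} with hM
  have hqmem : mkS K g n (qR K g) ∈ M := Ideal.subset_span (Set.mem_insert _ _)
  have humem : mkS K g n (C (uR K)) ∈ M :=
    Ideal.subset_span (Set.mem_insert_of_mem _ rfl)
  have hkerf : RingHom.ker f = M := by
    apply le_antisymm
    · intro x hx
      obtain ⟨P, rfl⟩ := Ideal.Quotient.mk_surjective x
      rw [RingHom.mem_ker] at hx
      have hx0 : Φ P = 0 := hx
      rw [hΦdef, RingHom.comp_apply, Ideal.Quotient.eq_zero_iff_mem,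
        Ideal.mem_span_singleton] at hx0
      obtain ⟨A, hA⟩ := hx0
      set B : (Ru K)[X] := A.map (tauR K) with hB
      have hmapB : Polynomial.mapRingHom (phiR K) B = A := by
        show (A.map (tauR K)).map (phiR K) = A
        rw [Polynomial.map_map]
        have hcomp : (phiR K).comp (tauR K) = RingHom.id K := by
          ext a; exact phi_tau K a
        rw [hcomp, Polynomial.map_id]
      have hmem : P - qR K g * B ∈ RingHom.ker (Polynomial.mapRingHom (phiR K)) := by
        rw [RingHom.mem_ker, map_sub, map_mul, map_q, hmapB, hA, sub_self]
      rw [Polynomial.ker_mapRingHom, ker_phi, Ideal.map_span, Set.image_singleton,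
        Ideal.mem_span_singleton] at hmem
      obtain ⟨D, hD⟩ := hmem
      have hP : P = qR K g * B + C (uR K) * D := by
        rw [show C (uR K) * D = P - qR K g * B from hD.symm]; ring
      show mkS K g n P ∈ M
      rw [hP, map_add, map_mul, map_mul]
      exact M.add_mem (by convert M.mul_mem_left (mkS K g n B) hqmem using 1; exact mul_comm (G := SR K g n) _ _)
        (by convert M.mul_mem_left (mkS K g n D) humem using 1; exact mul_comm (G := SR K g n) _ _)
    · rw [hM, Ideal.span_le]
      intro x hx
      simp only [Set.mem_insert_iff, Set.mem_singleton_iff] at hx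
      rcases hx with rfl | rfl
      · rw [SetLike.mem_coe, RingHom.mem_ker, hf_mk, hΦq]
      · rw [SetLike.mem_coe, RingHom.mem_ker, hf_mk, hΦu]
  have hMmax : M.IsMaximal := hkerf ▸ RingHom.ker_isMaximal_of_surjective f hfsurj
  haveI : Nontrivial (Ru K) := ⟨uR K, 0, uR_ne_zero K⟩
  have hqnil : (mkS K g n (qR K g)) ^ n = 0 := by
    rw [← map_pow, mkS, Ideal.Quotient.eq_zero_iff_mem]
    exact Ideal.mem_span_singleton_self _
  have hunil : (mkS K g n (C (uR K))) ^ 2 = 0 := by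
    rw [← map_pow, ← C_pow, uR_sq, map_zero, map_zero]
  refine ⟨hMmax, ?_, ?_⟩
  · intro M' hM'
    have hle : M ≤ M' := by
      rw [hM, Ideal.span_le]
      intro x hx
      simp only [Set.mem_insert_iff, Set.mem_singleton_iff] at hx
      rcases hx with rfl | rfl
      · exact (Ideal.IsMaximal.isPrime (α := SR K g n) hM').mem_of_pow_mem n (by rw [hqnil]; exact M'.zero_mem)
      · exact (Ideal.IsMaximal.isPrime (α := SR K g n) hM').mem_of_pow_mem 2 (by rw [hunil]; exact M'.zero_mem)
    exact (hMmax.eq_of_le hM'.ne_top hle).symm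
  · intro hchain
    have hqmonic : (qR K g).Monic := monic_aux _ _
    have hqbar0 : qbar K g ≠ 0 := (qbar_monic K g).ne_zero
    rcases hchain (Ideal.span {mkS K g n (qR K g)}) (Ideal.span {mkS K g n (C (uR K))})
      with h | h
    · have hmem : mkS K g n (qR K g) ∈ Ideal.span {mkS K g n (C (uR K))} :=
        h (Ideal.mem_span_singleton_self _)
      replace hmem := (Ideal.mem_span_singleton (α := SR K g n)).mp hmem
      obtain ⟨d, hd⟩ := hmem
      obtain ⟨D, rfl⟩ := Ideal.Quotient.mk_surjective d
      have : mkS K g n (qR K g - C (uR K) * D) = 0 := by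
        rw [map_sub, map_mul, hd]; exact sub_self _
      rw [mkS, Ideal.Quotient.eq_zero_iff_mem, Ideal.mem_span_singleton] at this
      obtain ⟨E, hE⟩ := this
      have huC : Polynomial.mapRingHom (phiR K) (C (uR K)) = 0 := by
        show (C (uR K)).map (phiR K) = 0
        rw [Polynomial.map_C, show phiR K (uR K) = 0 from phi_u K, C_0]
      have hKeq : qbar K g = qbar K g ^ n * (Polynomial.mapRingHom (phiR K) E) := by
        have := congrArg (Polynomial.mapRingHom (phiR K)) hE
        rw [map_sub, map_mul, map_mul, map_pow, map_q, huC, zero_mul, sub_zero] at this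
        exact this
      have hdvd : qbar K g ^ n ∣ qbar K g := ⟨_, hKeq⟩
      have hdeg := Polynomial.natDegree_le_of_dvd hdvd hqbar0
      rw [natDegree_pow, qbar_natDegree] at hdeg
      have hp3 : 3 ≤ p := by
        have hp2 : p ≠ 2 := by rintro rfl; revert hodd; decide
        have := hp.two_le
        omega
      have hpn : p ≤ n := Nat.le_self_pow hs.ne' p
      omega
    · have hmem : mkS K g n (C (uR K)) ∈ Ideal.span {mkS K g n (qR K g)} :=
        h (Ideal.mem_span_singleton_self _)
      replace hmem := (Ideal.mem_span_singleton (α := SR K g n)).mp hmem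
      obtain ⟨d, hd⟩ := hmem
      obtain ⟨D, rfl⟩ := Ideal.Quotient.mk_surjective d
      have : mkS K g n (C (uR K) - qR K g * D) = 0 := by
        rw [map_sub, map_mul, hd]; exact sub_self _
      rw [mkS, Ideal.Quotient.eq_zero_iff_mem, Ideal.mem_span_singleton] at this
      obtain ⟨E, hE⟩ := this
      have hCu : C (uR K) = qR K g * (D + qR K g ^ (n - 1) * E) := by
        have hq : qR K g ^ n = qR K g ^ (n - 1) * qR K g := by
          conv_lhs => rw [show n = (n - 1) + 1 by omega, pow_succ]
        linear_combination hE + E * hq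
      rcases eq_or_ne (D + qR K g ^ (n - 1) * E) 0 with h0 | h0
      · rw [h0, mul_zero, C_eq_zero] at hCu
        exact uR_ne_zero K hCu
      · have hdeg2 : (qR K g).natDegree = 2 := by
          have := natDegree_quadratic (a := (1 : Ru K)) (b := tR K g) (c := tR K (g ^ 2 / 2))
            one_ne_zero
          simpa [qR] using this
        have := congrArg natDegree hCu
        rw [natDegree_C, Polynomial.Monic.natDegree_mul' hqmonic h0, hdeg2] at this
        omega
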